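/- Let g : ℝⁿ → ℝ ∪ {∞} be proper, lower semicontinuous, and convex, and let φ, ψ : [0,∞) → ℝⁿ be two solutions of the differential inclusion x' ∈ −∂g(x) (absolutely continuous, with derivative in −∂g a.e.). Then t ↦ ‖φ(t) − ψ(t)‖ is nonincreasing on [0,∞). -/

import Mathlib

open Set MeasureTheory
open scoped RealInnerProductSpace

/-- Convex subdifferential of an extended-real-valued function. -/
def subdiffE {n : ℕ} (g : EuclideanSpace ℝ (Fin n) → EReal) (x : EuclideanSpace ℝ (Fin n)) :
    Set (EuclideanSpace ℝ (Fin n)) :=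
  {y | ∀ x', g x + ((⟪y, x' - x⟫ : ℝ) : EReal) ≤ g x'}

/-!
The subdifferential of a proper function is a monotone operator: if `-φ' ∈ ∂g(φ)` and
`-ψ' ∈ ∂g(ψ)`, adding the two subgradient inequalities gives `⟪φ' - ψ', φ - ψ⟫ ≤ 0`. The
difference `u = φ - ψ` is absolutely continuous, hence so is `‖u‖²`, whose derivative
`2⟪u', u⟫` is therefore a.e. nonpositive; the fundamental theorem of calculus for absolutely
continuous functions then shows that `‖u‖²` is nonincreasing.
-/

open Filter

namespace AbsolutelyContinuousOnInterval

variable {X Y : Type*} [PseudoMetricSpace X] [PseudoMetricSpace Y]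

theorem of_dist_le_mul {f : ℝ → X} {g : ℝ → Y} {a b C : ℝ}
    (hg : AbsolutelyContinuousOnInterval g a b)
    (hfg : ∀ x ∈ uIcc a b, ∀ y ∈ uIcc a b, dist (f x) (f y) ≤ C * dist (g x) (g y)) :
    AbsolutelyContinuousOnInterval f a b := by
  unfold AbsolutelyContinuousOnInterval at hg ⊢
  refine squeeze_zero' (Eventually.of_forall fun _ ↦ Finset.sum_nonneg fun _ _ ↦ dist_nonneg)
    ?_ (by simpa using hg.const_mul C)
  rw [eventually_inf_principal]
  filter_upwards with ⟨n, I⟩ hnI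
  rw [Finset.mul_sum]
  exact Finset.sum_le_sum fun i hi ↦ hfg _ (hnI.1 i hi).1 _ (hnI.1 i hi).2

theorem norm {F : Type*} [SeminormedAddCommGroup F] {f : ℝ → F} {a b : ℝ}
    (hf : AbsolutelyContinuousOnInterval f a b) :
    AbsolutelyContinuousOnInterval (‖f ·‖) a b :=
  hf.of_dist_le_mul (C := 1) fun x _ y _ ↦ by
    simpa [Real.dist_eq, dist_eq_norm] using abs_norm_sub_norm_le (f x) (f y)

theorem le_of_ae_deriv_nonpos {f : ℝ → ℝ} {a b : ℝ} (hf : AbsolutelyContinuousOnInterval f a b)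
    (hab : a ≤ b) (hf' : ∀ᵐ x, x ∈ Icc a b → deriv f x ≤ 0) : f b ≤ f a := by
  rw [← sub_nonpos, ← hf.integral_deriv_eq_sub, intervalIntegral.integral_of_le hab]
  refine integral_nonpos_of_ae ?_
  filter_upwards [ae_restrict_mem measurableSet_Ioc, ae_restrict_of_ae hf'] with x hx hx'
  exact hx' (Ioc_subset_Icc_self hx)

end AbsolutelyContinuousOnInterval

section Primitive

variable {E : Type*} [NormedAddCommGroup E] [NormedSpace ℝ E]

theorem IntervalIntegrable.absolutelyContinuousOnInterval_add_intervalIntegral {w : ℝ → E}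
    {a b : ℝ} (hw : IntervalIntegrable w volume a b) (c : E) :
    AbsolutelyContinuousOnInterval (fun x ↦ c + ∫ r in a..x, w r) a b := by
  refine (hw.norm.absolutelyContinuousOnInterval_intervalIntegral (c := a) left_mem_uIcc)
    |>.of_dist_le_mul (C := 1) fun x hx y hy ↦ ?_
  have hwx : IntervalIntegrable w volume a x := hw.mono_set (uIcc_subset_uIcc_left hx)
  have hwy : IntervalIntegrable w volume a y := hw.mono_set (uIcc_subset_uIcc_left hy)
  rw [dist_add_left, dist_comm, dist_eq_norm, dist_comm (∫ r in a..x, ‖w r‖), Real.dist_eq,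
    one_mul, intervalIntegral.integral_interval_sub_left hwy hwx,
    intervalIntegral.integral_interval_sub_left hwy.norm hwx.norm]
  exact intervalIntegral.norm_integral_le_abs_integral_norm

theorem eq_add_intervalIntegral_of_primitive_from_zero {f f' : ℝ → E}
    (hf' : ∀ T, IntervalIntegrable f' volume 0 T)
    (hf : ∀ t ∈ Ici (0 : ℝ), f t = f 0 + ∫ r in 0..t, f' r) {s t : ℝ} (hs : 0 ≤ s) (ht : 0 ≤ t) :
    f t = f s + ∫ r in s..t, f' r := by
  rw [hf t ht, hf s hs, ← intervalIntegral.integral_interval_sub_left (hf' t) (hf' s)]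
  abel

end Primitive

theorem norm_add_intervalIntegral_le_of_inner_nonpos {V : Type*} [NormedAddCommGroup V]
    [InnerProductSpace ℝ V] [CompleteSpace V] {w : ℝ → V} {a b : ℝ} (c : V) (hab : a ≤ b)
    (hw : IntervalIntegrable w volume a b)
    (hinner : ∀ᵐ x, x ∈ Icc a b → ⟪w x, c + ∫ r in a..x, w r⟫ ≤ 0) :
    ‖c + ∫ x in a..b, w x‖ ≤ ‖c‖ := by
  set u : ℝ → V := fun x ↦ c + ∫ r in a..x, w r
  have hu : AbsolutelyContinuousOnInterval (‖u ·‖ ^ 2) a b := by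
    have := (hw.absolutelyContinuousOnInterval_add_intervalIntegral c).norm
    simpa only [sq] using this.fun_mul this
  have hderiv : ∀ᵐ x, x ∈ Icc a b → deriv (‖u ·‖ ^ 2) x ≤ 0 := by
    filter_upwards [hw.ae_hasDerivAt_integral, hinner] with x hx hxw hx'
    rw [uIcc_of_le hab] at hx
    rw [((hx hx' a (by simp [hab])).const_add c).norm_sq.deriv, real_inner_comm]
    nlinarith [hxw hx']
  have := hu.le_of_ae_deriv_nonpos hab hderiv
  simpa [u] using (pow_le_pow_iff_left₀ (norm_nonneg _) (norm_nonneg _) two_ne_zero).mp this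

theorem ne_top_of_mem_subdiffE {n : ℕ} {g : EuclideanSpace ℝ (Fin n) → EReal}
    (htop : ∃ x, g x ≠ ⊤) {x y : EuclideanSpace ℝ (Fin n)} (hy : y ∈ subdiffE g x) :
    g x ≠ ⊤ := by
  obtain ⟨x₀, hx₀⟩ := htop
  intro hx
  have := hy x₀
  rw [hx, EReal.top_add_of_ne_bot (EReal.coe_ne_bot _), top_le_iff] at this
  exact hx₀ this

theorem inner_sub_nonneg_of_mem_subdiffE {n : ℕ} {g : EuclideanSpace ℝ (Fin n) → EReal}
    (hbot : ∀ x, g x ≠ ⊥) (htop : ∃ x, g x ≠ ⊤) {x x' y y' : EuclideanSpace ℝ (Fin n)}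
    (hy : y ∈ subdiffE g x) (hy' : y' ∈ subdiffE g x') : 0 ≤ ⟪y - y', x - x'⟫ := by
  have hx := EReal.coe_toReal (ne_top_of_mem_subdiffE htop hy) (hbot x)
  have hx' := EReal.coe_toReal (ne_top_of_mem_subdiffE htop hy') (hbot x')
  have h := hy x'
  have h' := hy' x
  rw [← hx, ← hx', ← EReal.coe_add, EReal.coe_le_coe_iff] at h h'
  rw [← neg_sub x x', inner_neg_right] at h
  rw [inner_sub_left]
  linarith

theorem stmt2_general {n : ℕ}
    (g : EuclideanSpace ℝ (Fin n) → EReal)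
    -- proper
    (hproper : (∀ x, g x ≠ ⊥) ∧ ∃ x, g x ≠ ⊤)
    (φ φ' ψ ψ' : ℝ → EuclideanSpace ℝ (Fin n))
    -- φ and ψ are locally absolutely continuous with a.e. derivatives φ', ψ'
    (hφint : ∀ T : ℝ, IntervalIntegrable φ' volume 0 T)
    (hφFTC : ∀ t ∈ Ici (0:ℝ), φ t = φ 0 + ∫ s in (0:ℝ)..t, φ' s)
    (hψint : ∀ T : ℝ, IntervalIntegrable ψ' volume 0 T)
    (hψFTC : ∀ t ∈ Ici (0:ℝ), ψ t = ψ 0 + ∫ s in (0:ℝ)..t, ψ' s)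
    -- solutions of x' ∈ -∂g(x) a.e.
    (hφincl : ∀ᵐ t ∂volume, t ∈ Ici (0:ℝ) → -φ' t ∈ subdiffE g (φ t))
    (hψincl : ∀ᵐ t ∂volume, t ∈ Ici (0:ℝ) → -ψ' t ∈ subdiffE g (ψ t)) :
    AntitoneOn (fun t => ‖φ t - ψ t‖) (Ici 0) := by
  intro s hs t ht hst
  have hdiff : ∀ r ∈ Ici s, φ r - ψ r = (φ s - ψ s) + ∫ q in s..r, (φ' q - ψ' q) := by
    intro r hr
    have hr0 : 0 ≤ r := le_trans hs hr
    rw [eq_add_intervalIntegral_of_primitive_from_zero hφint hφFTC hs hr0,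
      eq_add_intervalIntegral_of_primitive_from_zero hψint hψFTC hs hr0,
      intervalIntegral.integral_sub ((hφint s).symm.trans (hφint r))
        ((hψint s).symm.trans (hψint r))]
    abel
  have hdissip : ∀ᵐ r, r ∈ Icc s t →
      ⟪φ' r - ψ' r, (φ s - ψ s) + ∫ q in s..r, (φ' q - ψ' q)⟫ ≤ 0 := by
    filter_upwards [hφincl, hψincl] with r hφr hψr hr
    have hr0 : r ∈ Ici (0 : ℝ) := le_trans hs hr.1
    have := inner_sub_nonneg_of_mem_subdiffE hproper.1 hproper.2 (hφr hr0) (hψr hr0)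
    rw [neg_sub_neg, ← neg_sub, inner_neg_left] at this
    rw [← hdiff r hr.1]
    linarith
  have hw : IntervalIntegrable (fun r ↦ φ' r - ψ' r) volume s t :=
    ((hφint s).symm.trans (hφint t)).sub ((hψint s).symm.trans (hψint t))
  change ‖φ t - ψ t‖ ≤ ‖φ s - ψ s‖
  rw [hdiff t hst]
  exact norm_add_intervalIntegral_le_of_inner_nonpos (φ s - ψ s) hst hw hdissip

theorem stmt2 {n : ℕ}
    (g : EuclideanSpace ℝ (Fin n) → EReal)
    -- proper
    (hproper : (∀ x, g x ≠ ⊥) ∧ ∃ x, g x ≠ ⊤)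
    -- lower semicontinuous
    (hlsc : LowerSemicontinuous g)
    -- convex
    (hconv : ∀ x y : EuclideanSpace ℝ (Fin n), ∀ a b : ℝ, 0 ≤ a → 0 ≤ b → a + b = 1 →
      g (a • x + b • y) ≤ ((a : EReal) * g x + (b : EReal) * g y))
    (φ φ' ψ ψ' : ℝ → EuclideanSpace ℝ (Fin n))
    -- φ and ψ are locally absolutely continuous with a.e. derivatives φ', ψ'
    (hφint : ∀ T : ℝ, IntervalIntegrable φ' volume 0 T)
    (hφFTC : ∀ t ∈ Ici (0:ℝ), φ t = φ 0 + ∫ s in (0:ℝ)..t, φ' s)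
    (hψint : ∀ T : ℝ, IntervalIntegrable ψ' volume 0 T)
    (hψFTC : ∀ t ∈ Ici (0:ℝ), ψ t = ψ 0 + ∫ s in (0:ℝ)..t, ψ' s)
    -- solutions of x' ∈ -∂g(x) a.e.
    (hφincl : ∀ᵐ t ∂volume, t ∈ Ici (0:ℝ) → -φ' t ∈ subdiffE g (φ t))
    (hψincl : ∀ᵐ t ∂volume, t ∈ Ici (0:ℝ) → -ψ' t ∈ subdiffE g (ψ t)) :
    AntitoneOn (fun t => ‖φ t - ψ t‖) (Ici 0) :=
  stmt2_general g hproper φ φ' ψ ψ' hφint hφFTC hψint hψFTC hφincl hψincl
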